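/- Let G be a 2-connected unichord-free graph that is not a cycle, and let G' be its reduced graph (obtained by contracting every branch of length at least 3 to a branch of length 2). Then G' is 2-connected and unichord-free. -/

import Mathlib

open SimpleGraph

/-- An edge `e` of `G` is a chord of the cycle `c` if it joins two vertices of `c`
but is not an edge of `c`. -/
def IsChord {V : Type} (G : SimpleGraph V) {v : V} (c : G.Walk v v) (e : Sym2 V) : Prop :=
  e ∈ G.edgeSet ∧ e ∉ c.edges ∧ ∀ x ∈ e, x ∈ c.support

/-- A graph is unichord-free if no cycle has a unique chord. -/
def UnichordFree {V : Type} (G : SimpleGraph V) : Prop :=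
  ∀ (v : V) (c : G.Walk v v), c.IsCycle → ¬ ∃! e : Sym2 V, IsChord G c e

/-- `G` contains a square, i.e. an induced cycle on four vertices. -/
def HasSquare {V : Type} (G : SimpleGraph V) : Prop :=
  ∃ a b c d : V, G.Adj a b ∧ G.Adj b c ∧ G.Adj c d ∧ G.Adj d a ∧
    ¬ G.Adj a c ∧ ¬ G.Adj b d ∧ a ≠ c ∧ b ≠ d

/-- A total colouring: adjacent vertices, adjacent edges, and incident
vertex-edge pairs get different colours. -/
def IsTotalColouring {V α : Type} (G : SimpleGraph V) (fv : V → α) (fe : Sym2 V → α) : Prop :=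
  (∀ u v, G.Adj u v → fv u ≠ fv v) ∧
  (∀ e₁ e₂, e₁ ∈ G.edgeSet → e₂ ∈ G.edgeSet → e₁ ≠ e₂ → (∃ x, x ∈ e₁ ∧ x ∈ e₂) →
    fe e₁ ≠ fe e₂) ∧
  (∀ x e, e ∈ G.edgeSet → x ∈ e → fv x ≠ fe e)

/-- `G` admits a total colouring with `k` colours. -/
def TotalColourable {V : Type} (G : SimpleGraph V) (k : ℕ) : Prop :=
  ∃ (fv : V → Fin k) (fe : Sym2 V → Fin k), IsTotalColouring G fv fe

/-- A proper edge colouring with `k` colours. -/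
def EdgeColourable {V : Type} (G : SimpleGraph V) (k : ℕ) : Prop :=
  ∃ fe : Sym2 V → ℕ, (∀ e ∈ G.edgeSet, fe e < k) ∧
    ∀ e₁ e₂, e₁ ∈ G.edgeSet → e₂ ∈ G.edgeSet → e₁ ≠ e₂ → (∃ x, x ∈ e₁ ∧ x ∈ e₂) →
      fe e₁ ≠ fe e₂

/-- Two-connectivity: at least three vertices and deleting any single vertex
leaves a connected graph. -/
def TwoConnected {V : Type} (G : SimpleGraph V) : Prop :=
  3 ≤ (Set.univ : Set V).ncard ∧ ∀ v : V, (G.induce ({v}ᶜ : Set V)).Connected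

/-- A graph is sparse if its vertices of degree at least 3 form an independent set. -/
def Sparse {V : Type} (G : SimpleGraph V) : Prop :=
  ∀ u v, G.Adj u v → ¬ (3 ≤ (G.neighborSet u).ncard ∧ 3 ≤ (G.neighborSet v).ncard)

/-- `G` is a cycle graph. -/
def IsCycleGraph {V : Type} (G : SimpleGraph V) : Prop :=
  G.Connected ∧ ∀ v : V, (G.neighborSet v).ncard = 2

/-- The Petersen graph: outer 5-cycle `a`, inner pentagram `b`, spokes `aᵢbᵢ`. -/
def petersen : SimpleGraph (Fin 5 ⊕ Fin 5) :=
  SimpleGraph.fromRel (fun x y => match x, y with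
    | Sum.inl i, Sum.inl j => j = i + 1
    | Sum.inr i, Sum.inr j => j = i + 2
    | Sum.inl i, Sum.inr j => i = j
    | Sum.inr _, Sum.inl _ => False)

/-- The Heawood graph: a 14-cycle together with the seven standard chords. -/
def heawood : SimpleGraph (Fin 14) :=
  SimpleGraph.fromRel (fun i j => j = i + 1 ∨
    (i, j) ∈ ([((0 : Fin 14), (9 : Fin 14)), (1, 6), (2, 11), (3, 8), (4, 13), (5, 10),
      (7, 12)] : List (Fin 14 × Fin 14)))

/-- Subdivide the edge `uv` of `G`: the new vertex is `Sum.inr ()`. -/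
def SubdivideEdge {V : Type} (G : SimpleGraph V) (u v : V) : SimpleGraph (V ⊕ Unit) :=
  SimpleGraph.fromRel (fun x y => match x, y with
    | Sum.inl a, Sum.inl b => G.Adj a b ∧ ¬ (s(a, b) = s(u, v))
    | Sum.inl a, Sum.inr _ => a = u ∨ a = v
    | Sum.inr _, Sum.inl _ => False
    | Sum.inr _, Sum.inr _ => False)

/-- `G` is obtained from `H` (up to isomorphism) by repeatedly subdividing edges
incident to at least one vertex of degree 2. -/
inductive IsSubdivisionOf : {W : Type} → SimpleGraph W → {U : Type} → SimpleGraph U → Prop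
  | refl : ∀ {W : Type} (H : SimpleGraph W) {U : Type} (G : SimpleGraph U),
      (G ≃g H) → IsSubdivisionOf H G
  | step : ∀ {W : Type} (H : SimpleGraph W) {U : Type} (G : SimpleGraph U) (u v : U),
      G.Adj u v → ((G.neighborSet u).ncard = 2 ∨ (G.neighborSet v).ncard = 2) →
      IsSubdivisionOf H G → ∀ {U' : Type} (G' : SimpleGraph U'),
      (G' ≃g SubdivideEdge G u v) → IsSubdivisionOf H G'

/-- A 2-extension of `H`: first delete a set `S` of vertices of `H`, then
subdivide edges incident to at least one vertex of degree 2. -/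
def IsTwoExtensionOf {W U : Type} (H : SimpleGraph W) (G : SimpleGraph U) : Prop :=
  ∃ S : Set W, IsSubdivisionOf (H.induce Sᶜ) G

/-- `G'` is the reduced graph of `G`: every branch of `G'` has length at most 2
(no degree-2 vertex has a neighbour of degree 2) and `G` is obtained from `G'`
by subdividing edges incident to degree-2 vertices. -/
def IsReducedGraphOf {W U : Type} (G' : SimpleGraph W) (G : SimpleGraph U) : Prop :=
  (∀ v : W, (G'.neighborSet v).ncard = 2 →
    ∀ w ∈ G'.neighborSet v, 3 ≤ (G'.neighborSet w).ncard) ∧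
  IsSubdivisionOf G' G

/-- There is an `ab`-path of `G` all of whose vertices lie in `S`. -/
def ContainsPathBetween {V : Type} (G : SimpleGraph V) (S : Set V) (a b : V) : Prop :=
  ∃ p : G.Walk a b, p.IsPath ∧ ∀ v ∈ p.support, v ∈ S

/-- The subgraph of `G` induced by `S` is precisely an `ab`-path. -/
def InducedIsPathGraph {V : Type} (G : SimpleGraph V) (S : Set V) (a b : V) : Prop :=
  ∃ p : G.Walk a b, p.IsPath ∧ (∀ v, v ∈ S ↔ v ∈ p.support) ∧
    ∀ u v, u ∈ S → v ∈ S → G.Adj u v → s(u, v) ∈ p.edges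

/-- `(X, Y, a, b)` is a split of a proper 2-cutset of `G`. -/
structure IsProper2CutsetSplit {V : Type} (G : SimpleGraph V) (X Y : Set V) (a b : V) :
    Prop where
  hne : a ≠ b
  hnadj : ¬ G.Adj a b
  hcover : ∀ v, v ∈ X ∨ v ∈ Y ∨ v = a ∨ v = b
  hdisj : Disjoint X Y
  haX : a ∉ X
  haY : a ∉ Y
  hbX : b ∉ X
  hbY : b ∉ Y
  hX2 : 2 ≤ X.ncard
  hY2 : 2 ≤ Y.ncard
  hsep : ∀ x ∈ X, ∀ y ∈ Y, ¬ G.Adj x y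
  hXpath : ContainsPathBetween G (X ∪ {a, b}) a b
  hXnotpath : ¬ InducedIsPathGraph G (X ∪ {a, b}) a b
  hYpath : ContainsPathBetween G (Y ∪ {a, b}) a b
  hYnotpath : ¬ InducedIsPathGraph G (Y ∪ {a, b}) a b

/-- `G` has a proper 2-cutset. -/
def HasProper2Cutset {V : Type} (G : SimpleGraph V) : Prop :=
  ∃ (a b : V) (X Y : Set V), IsProper2CutsetSplit G X Y a b

/-- `G` has a 1-cutset (a cutvertex) with split `(X, Y, v)`. -/
def Has1Cutset {V : Type} (G : SimpleGraph V) : Prop :=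
  ∃ (v : V) (X Y : Set V), X.Nonempty ∧ Y.Nonempty ∧ Disjoint X Y ∧ v ∉ X ∧ v ∉ Y ∧
    (∀ w, w ∈ X ∨ w ∈ Y ∨ w = v) ∧ ∀ x ∈ X, ∀ y ∈ Y, ¬ G.Adj x y

/-- `(X, Y, A, B)` is a split of a proper 1-join of `G`. -/
structure IsProper1JoinSplit {V : Type} (G : SimpleGraph V) (X Y A B : Set V) : Prop where
  hcover : ∀ v, v ∈ X ∨ v ∈ Y
  hdisj : Disjoint X Y
  hAX : A ⊆ X
  hBY : B ⊆ Y
  hA2 : 2 ≤ A.ncard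
  hB2 : 2 ≤ B.ncard
  hAstable : ∀ u ∈ A, ∀ v ∈ A, ¬ G.Adj u v
  hBstable : ∀ u ∈ B, ∀ v ∈ B, ¬ G.Adj u v
  hcomplete : ∀ u ∈ A, ∀ v ∈ B, G.Adj u v
  hother : ∀ u ∈ X, ∀ v ∈ Y, G.Adj u v → u ∈ A ∧ v ∈ B

/-- `G` has a proper 1-join. -/
def HasProper1Join {V : Type} (G : SimpleGraph V) : Prop :=
  ∃ X Y A B : Set V, IsProper1JoinSplit G X Y A B


/-! Both properties pass from a subdivision back to the graph it subdivides, so it suffices to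
undo a single subdivision of an edge `uv` by a new vertex `w`. Contracting `w` onto an end of `uv`
maps each vertex-deleted subgraph of the subdivision onto the corresponding vertex-deleted
subgraph of `G`, so connectivity survives. A cycle of `G` lifts to a cycle of the subdivision,
routed through `w` if it uses `uv`, with the same chords: an edge at a vertex of degree 2 is
never a chord, and this applies both to `uv`, one of whose ends has degree 2, and to the two
edges at `w`. -/

namespace SimpleGraph

variable {α β : Type*} {A : SimpleGraph α} {B : SimpleGraph β}

lemma Reachable.map_of_adj_imp_eq_or_adj {f : α → β}
    (hf : ∀ ⦃x y⦄, A.Adj x y → f x = f y ∨ B.Adj (f x) (f y)) {x y : α} (h : A.Reachable x y) :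
    B.Reachable (f x) (f y) := by
  obtain ⟨p⟩ := h
  induction p with
  | nil => rfl
  | cons hxy _ ih => exact (hf hxy).elim (· ▸ ih) (·.reachable.trans ih)

lemma Connected.of_surjective_of_adj_imp_eq_or_adj {f : α → β} (hsurj : f.Surjective)
    (hf : ∀ ⦃x y⦄, A.Adj x y → f x = f y ∨ B.Adj (f x) (f y)) (h : A.Connected) :
    B.Connected := by
  obtain ⟨x⟩ := h.nonempty
  rw [connected_iff_exists_forall_reachable]
  refine ⟨f x, fun b => ?_⟩
  obtain ⟨y, rfl⟩ := hsurj b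
  exact (h x y).map_of_adj_imp_eq_or_adj hf

end SimpleGraph

namespace SimpleGraph.Walk

variable {V : Type*} {G : SimpleGraph V} {u v : V}

lemma IsCycle.mk_start_mem_edges_iff {d : G.Walk u u} (hd : d.IsCycle) :
    s(u, v) ∈ d.edges ↔ v = d.snd ∨ v = d.penultimate := by
  rw [← adj_toSubgraph_iff_mem_edges, ← Subgraph.mem_neighborSet,
    hd.neighborSet_toSubgraph_endpoint, Set.mem_insert_iff, Set.mem_singleton_iff]

lemma IsCycle.mk_mem_edges_of_ncard_neighborSet_eq_two {a : V} {c : G.Walk a a}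
    (hc : c.IsCycle) (hu : u ∈ c.support) (hdeg : (G.neighborSet u).ncard = 2)
    (huv : G.Adj u v) : s(u, v) ∈ c.edges := by
  classical
  set d := c.rotate u hu
  have hd : d.IsCycle := hc.rotate hu
  rw [← (c.rotate_edges u hu).mem_iff, hd.mk_start_mem_edges_iff]
  have hsub : {d.snd, d.penultimate} ⊆ G.neighborSet u := by
    rintro x (rfl | rfl)
    · exact d.adj_snd hd.not_nil
    · exact (d.adj_penultimate hd.not_nil).symm
  have hfin : (G.neighborSet u).Finite := Set.finite_of_ncard_ne_zero (by omega)
  have heq := Set.eq_of_subset_of_ncard_le hsub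
    (by rw [hdeg, Set.ncard_pair hd.snd_ne_penultimate]) hfin
  have hv : v ∈ G.neighborSet u := huv
  rwa [← heq, Set.mem_insert_iff, Set.mem_singleton_iff] at hv

lemma IsCycle.exists_cons_of_mk_start_mem_edges {d : G.Walk u u} (hd : d.IsCycle)
    (huv : s(u, v) ∈ d.edges) :
    ∃ (h : G.Adj u v) (t : G.Walk v u), (cons h t).IsCycle ∧
      (∀ x, x ∈ (cons h t).support ↔ x ∈ d.support) ∧
      ∀ e, e ∈ (cons h t).edges ↔ e ∈ d.edges := by
  have of_snd_eq : ∀ d' : G.Walk u u, d'.IsCycle → d'.snd = v →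
      (∀ x, x ∈ d'.support ↔ x ∈ d.support) → (∀ e, e ∈ d'.edges ↔ e ∈ d.edges) →
      ∃ (h : G.Adj u v) (t : G.Walk v u), (cons h t).IsCycle ∧
        (∀ x, x ∈ (cons h t).support ↔ x ∈ d.support) ∧
        ∀ e, e ∈ (cons h t).edges ↔ e ∈ d.edges := by
    rintro d' hd' rfl hsupp hedges
    have hcons := d'.cons_tail_eq hd'.not_nil
    exact ⟨_, d'.tail, by rwa [hcons], by rwa [hcons], by rwa [hcons]⟩
  rcases hd.mk_start_mem_edges_iff.mp huv with hv | hv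
  · exact of_snd_eq d hd hv.symm (fun _ => .rfl) (fun _ => .rfl)
  · exact of_snd_eq d.reverse hd.reverse (by rw [snd_reverse, hv]) (by simp) (by simp)

lemma IsCycle.exists_cons_of_mk_mem_edges {a : V} {c : G.Walk a a} (hc : c.IsCycle)
    (huv : s(u, v) ∈ c.edges) :
    ∃ (h : G.Adj u v) (t : G.Walk v u), (cons h t).IsCycle ∧
      (∀ x, x ∈ (cons h t).support ↔ x ∈ c.support) ∧
      ∀ e, e ∈ (cons h t).edges ↔ e ∈ c.edges := by
  classical
  have hu := c.fst_mem_support_of_mem_edges huv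
  obtain ⟨h, t, ht, hsupp, hedges⟩ :=
    (hc.rotate hu).exists_cons_of_mk_start_mem_edges ((c.rotate_edges u hu).mem_iff.mpr huv)
  exact ⟨h, t, ht, fun x => (hsupp x).trans (c.mem_support_rotate_iff u hu),
    fun e => (hedges e).trans (c.rotate_edges u hu).mem_iff⟩

end SimpleGraph.Walk

lemma isChord_mk {V : Type} {G : SimpleGraph V} {v : V} {c : G.Walk v v} {x y : V} :
    IsChord G c s(x, y) ↔ G.Adj x y ∧ s(x, y) ∉ c.edges ∧ x ∈ c.support ∧ y ∈ c.support := by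
  simp [IsChord]

lemma not_isChord_of_ncard_neighborSet_eq_two {V : Type} {G : SimpleGraph V} {a x : V}
    {c : G.Walk a a} (hc : c.IsCycle) (hdeg : (G.neighborSet x).ncard = 2) {e : Sym2 V}
    (hx : x ∈ e) : ¬ IsChord G c e := by
  obtain ⟨y, rfl⟩ := Sym2.mem_iff_exists.mp hx
  rw [isChord_mk]
  rintro ⟨hxy, hnot, hxc, -⟩
  exact hnot (hc.mk_mem_edges_of_ncard_neighborSet_eq_two hxc hdeg hxy)

lemma existsUnique_of_forall_iff_exists_eq {α β : Sort*} {f : α → β} {P : α → Prop}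
    {Q : β → Prop} (h : ∀ b, Q b ↔ ∃ a, P a ∧ f a = b) (hP : ∃! a, P a) : ∃! b, Q b := by
  obtain ⟨a, ha, huniq⟩ := hP
  refine ⟨f a, (h _).mpr ⟨a, ha, rfl⟩, fun b hb => ?_⟩
  obtain ⟨a', ha', rfl⟩ := (h b).mp hb
  rw [huniq a' ha']

lemma isChord_map_iff {α β : Type} {A : SimpleGraph α} {B : SimpleGraph β} (f : A ↪g B)
    {v : α} (c : A.Walk v v) (e : Sym2 β) :
    IsChord B (c.map f.toHom) e ↔ ∃ e₀, IsChord A c e₀ ∧ Sym2.map f e₀ = e := by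
  constructor
  · induction e using Sym2.ind with
    | _ x y =>
      rw [isChord_mk, Walk.support_map, Walk.edges_map]
      rintro ⟨hxy, hnot, hx, hy⟩
      simp only [List.mem_map] at hx hy
      obtain ⟨a, ha, rfl⟩ := hx
      obtain ⟨b, hb, rfl⟩ := hy
      refine ⟨s(a, b), isChord_mk.mpr ⟨f.map_adj_iff.mp hxy, fun h => hnot ?_, ha, hb⟩, rfl⟩
      exact List.mem_map_of_mem (f := Sym2.map f.toHom) h
  · rintro ⟨e₀, he₀, rfl⟩
    induction e₀ using Sym2.ind with
    | _ a b =>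
      obtain ⟨hab, hnot, ha, hb⟩ := isChord_mk.mp he₀
      rw [Sym2.map_mk, isChord_mk, Walk.support_map, Walk.edges_map]
      refine ⟨f.map_adj_iff.mpr hab, fun h => hnot ?_, List.mem_map_of_mem ha,
        List.mem_map_of_mem hb⟩
      exact (List.mem_map_of_injective (Sym2.map.injective f.injective)).mp h

lemma UnichordFree.of_embedding {α β : Type} {A : SimpleGraph α} {B : SimpleGraph β}
    (f : A ↪g B) (h : UnichordFree B) : UnichordFree A := fun v c hc hchord =>
  h (f v) (c.map f.toHom) (hc.map f.injective)
    (existsUnique_of_forall_iff_exists_eq (isChord_map_iff f c) hchord)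

lemma TwoConnected.of_iso {α β : Type} {A : SimpleGraph α} {B : SimpleGraph β} (e : A ≃g B)
    (h : TwoConnected B) : TwoConnected A := by
  refine ⟨?_, fun x => ?_⟩
  · rw [Set.ncard_univ, Nat.card_congr e.toEquiv, ← Set.ncard_univ]
    exact h.1
  · have hbij : Set.BijOn e ({x}ᶜ : Set α) ({e x}ᶜ : Set β) :=
      ⟨fun y hy => by simpa using hy, e.injective.injOn,
        fun y hy => ⟨e.symm y, by simpa [e.symm_apply_eq, eq_comm] using hy, by simp⟩⟩
    exact (Iso.induce e hbij).connected_iff.mpr (h.2 (e x))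

section SubdivideEdge

variable {V : Type} {G : SimpleGraph V} {u v : V}

@[simp]
lemma subdivideEdge_adj_inl_inl {a b : V} :
    (SubdivideEdge G u v).Adj (.inl a) (.inl b) ↔ G.Adj a b ∧ s(a, b) ≠ s(u, v) := by
  simp only [SubdivideEdge, fromRel_adj, G.adj_comm b a, Sym2.eq_swap (a := b)]
  grind [G.ne_of_adj]

@[simp]
lemma subdivideEdge_adj_inl_inr {a : V} {t : Unit} :
    (SubdivideEdge G u v).Adj (.inl a) (.inr t) ↔ a = u ∨ a = v := by
  simp [SubdivideEdge]

@[simp]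
lemma subdivideEdge_adj_inr_inl {a : V} {t : Unit} :
    (SubdivideEdge G u v).Adj (.inr t) (.inl a) ↔ a = u ∨ a = v := by
  simp [SubdivideEdge]

@[simp]
lemma not_subdivideEdge_adj_inr_inr {s t : Unit} :
    ¬ (SubdivideEdge G u v).Adj (.inr s) (.inr t) := by
  simp [SubdivideEdge]

lemma ncard_neighborSet_subdivideEdge_inr (huv : G.Adj u v) :
    ((SubdivideEdge G u v).neighborSet (.inr ())).ncard = 2 := by
  have : (SubdivideEdge G u v).neighborSet (.inr ()) = {.inl u, .inl v} := by
    ext (x | x) <;> simp [eq_comm]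
  rw [this, Set.ncard_pair (by simpa using huv.ne)]

def subdivideEdgeInl (G : SimpleGraph V) (u v : V) :
    G.deleteEdges {s(u, v)} ↪g SubdivideEdge G u v where
  toFun := Sum.inl
  inj' := Sum.inl_injective
  map_rel_iff' := by simp

def SimpleGraph.Walk.toSubdivideEdge {x y : V} (p : G.Walk x y) (hp : s(u, v) ∉ p.edges) :
    (SubdivideEdge G u v).Walk (.inl x) (.inl y) :=
  (p.toDeleteEdge s(u, v) hp).map (subdivideEdgeInl G u v).toHom

@[simp]
lemma SimpleGraph.Walk.support_toSubdivideEdge {x y : V} (p : G.Walk x y) (hp : s(u, v) ∉ p.edges) :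
    (p.toSubdivideEdge hp).support = p.support.map Sum.inl := by
  simp [Walk.toSubdivideEdge, subdivideEdgeInl]

@[simp]
lemma SimpleGraph.Walk.edges_toSubdivideEdge {x y : V} (p : G.Walk x y) (hp : s(u, v) ∉ p.edges) :
    (p.toSubdivideEdge hp).edges = p.edges.map (Sym2.map Sum.inl) := by
  simp [Walk.toSubdivideEdge, subdivideEdgeInl]

lemma SimpleGraph.Walk.IsPath.toSubdivideEdge {x y : V} {p : G.Walk x y} (h : p.IsPath)
    (hp : s(u, v) ∉ p.edges) : (p.toSubdivideEdge hp).IsPath :=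
  (h.toDeleteEdges _ _ _).map (subdivideEdgeInl G u v).injective

lemma SimpleGraph.Walk.IsCycle.toSubdivideEdge {x : V} {p : G.Walk x x} (h : p.IsCycle)
    (hp : s(u, v) ∉ p.edges) : (p.toSubdivideEdge hp).IsCycle :=
  (h.toDeleteEdges _ _ _).map (subdivideEdgeInl G u v).injective

lemma Sym2.map_inl_ne_of_inr_mem {α β : Type*} {e : Sym2 α} {z : Sym2 (α ⊕ β)} {y : β}
    (hy : Sum.inr y ∈ z) : Sym2.map Sum.inl e ≠ z := by
  rintro rfl
  simp at hy

lemma isChord_subdivideEdge_iff (huv : G.Adj u v)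
    (hdeg : (G.neighborSet u).ncard = 2 ∨ (G.neighborSet v).ncard = 2)
    {a : V} {c : G.Walk a a} (hc : c.IsCycle) {b : V ⊕ Unit} {C : (SubdivideEdge G u v).Walk b b}
    (hC : C.IsCycle) (hsupp : ∀ x, Sum.inl x ∈ C.support ↔ x ∈ c.support)
    (hedges : ∀ e, e ≠ s(u, v) → (Sym2.map Sum.inl e ∈ C.edges ↔ e ∈ c.edges))
    (e : Sym2 (V ⊕ Unit)) :
    IsChord (SubdivideEdge G u v) C e ↔ ∃ e₀, IsChord G c e₀ ∧ Sym2.map Sum.inl e₀ = e := by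
  have hw := ncard_neighborSet_subdivideEdge_inr huv
  constructor
  · induction e using Sym2.ind with
    | _ x y =>
      intro hchord
      rcases x with x | ⟨⟩
      swap
      · exact absurd hchord (not_isChord_of_ncard_neighborSet_eq_two hC hw (Sym2.mem_mk_left _ _))
      rcases y with y | ⟨⟩
      swap
      · exact absurd hchord (not_isChord_of_ncard_neighborSet_eq_two hC hw (Sym2.mem_mk_right _ _))
      obtain ⟨hxy, hnot, hx, hy⟩ := isChord_mk.mp hchord
      rw [subdivideEdge_adj_inl_inl] at hxy
      refine ⟨s(x, y), isChord_mk.mpr ⟨hxy.1, fun h => hnot ?_, (hsupp x).mp hx, (hsupp y).mp hy⟩,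
        rfl⟩
      exact (hedges _ hxy.2).mpr h
  · rintro ⟨e₀, he₀, rfl⟩
    have hne : e₀ ≠ s(u, v) := by
      rintro rfl
      rcases hdeg with hdeg | hdeg
      · exact not_isChord_of_ncard_neighborSet_eq_two hc hdeg (Sym2.mem_mk_left _ _) he₀
      · exact not_isChord_of_ncard_neighborSet_eq_two hc hdeg (Sym2.mem_mk_right _ _) he₀
    induction e₀ using Sym2.ind with
    | _ x y =>
      obtain ⟨hxy, hnot, hx, hy⟩ := isChord_mk.mp he₀
      rw [Sym2.map_mk, isChord_mk, subdivideEdge_adj_inl_inl, hsupp, hsupp, ← Sym2.map_mk,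
        hedges _ hne]
      exact ⟨⟨hxy, hne⟩, hnot, hx, hy⟩

lemma UnichordFree.of_subdivideEdge (huv : G.Adj u v)
    (hdeg : (G.neighborSet u).ncard = 2 ∨ (G.neighborSet v).ncard = 2)
    (h : UnichordFree (SubdivideEdge G u v)) : UnichordFree G := by
  intro a c hc hchord
  suffices ∃ (b : V ⊕ Unit) (C : (SubdivideEdge G u v).Walk b b), C.IsCycle ∧
      (∀ x, Sum.inl x ∈ C.support ↔ x ∈ c.support) ∧
      ∀ e, e ≠ s(u, v) → (Sym2.map Sum.inl e ∈ C.edges ↔ e ∈ c.edges) by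
    obtain ⟨b, C, hC, hsupp, hedges⟩ := this
    exact h b C hC (existsUnique_of_forall_iff_exists_eq
      (isChord_subdivideEdge_iff huv hdeg hc hC hsupp hedges) hchord)
  by_cases hmem : s(u, v) ∈ c.edges
  · obtain ⟨h, t, hct, hsupp, hedges⟩ := hc.exists_cons_of_mk_mem_edges hmem
    obtain ⟨ht, hnot⟩ := Walk.cons_isCycle_iff t h |>.mp hct
    have huw : (SubdivideEdge G u v).Adj (.inl u) (.inr ()) := by simp
    have hwv : (SubdivideEdge G u v).Adj (.inr ()) (.inl v) := by simp
    refine ⟨_, .cons huw (.cons hwv (t.toSubdivideEdge hnot)), ?_, fun x => ?_, fun e he => ?_⟩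
    · simp [Walk.cons_isCycle_iff, Walk.cons_isPath_iff, ht.toSubdivideEdge hnot, huv.ne,
        Sym2.map_inl_ne_of_inr_mem]
    · rw [← hsupp]
      simp
    · rw [← hedges]
      simp [he, Sym2.map_inl_ne_of_inr_mem,
        List.mem_map_of_injective (Sym2.map.injective Sum.inl_injective)]
  · exact ⟨_, c.toSubdivideEdge hmem, hc.toSubdivideEdge hmem, by simp,
      fun e _ => by simp [(Sym2.map.injective Sum.inl_injective).eq_iff]⟩

lemma exists_adj_ne_of_connected_subdivideEdge (huv : G.Adj u v)
    (h : ((SubdivideEdge G u v).induce {Sum.inr ()}ᶜ).Connected) :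
    ∃ z, G.Adj u z ∧ z ≠ v := by
  obtain ⟨p⟩ := h ⟨Sum.inl u, by simp⟩ ⟨Sum.inl v, by simp⟩
  have hp : ¬ p.Nil := Walk.not_nil_of_ne (by simpa using huv.ne)
  have hadj := p.adj_snd hp
  generalize p.snd = z at hadj
  obtain ⟨z | z, hz⟩ := z
  · simp only [comap_adj, Function.Embedding.subtype_apply, subdivideEdge_adj_inl_inl] at hadj
    exact ⟨z, hadj.1, fun h => hadj.2 (h ▸ rfl)⟩
  · simp at hz

lemma TwoConnected.of_subdivideEdge (huv : G.Adj u v)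
    (h : TwoConnected (SubdivideEdge G u v)) : TwoConnected G := by
  obtain ⟨hcard, hconn⟩ := h
  have : Finite (V ⊕ Unit) := Nat.finite_of_card_ne_zero (by rw [← Set.ncard_univ]; omega)
  have : Finite V := Finite.sum_left Unit
  refine ⟨?_, fun x => ?_⟩
  · obtain ⟨z, huz, hzv⟩ := exists_adj_ne_of_connected_subdivideEdge huv (hconn (Sum.inr ()))
    rw [← Set.ncard_eq_three.mpr ⟨u, v, z, huv.ne, huz.ne, hzv.symm, rfl⟩]
    exact Set.ncard_le_ncard (Set.subset_univ _)
  · obtain ⟨y, hy, hyx⟩ : ∃ y, (y = u ∨ y = v) ∧ y ≠ x := by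
      by_cases hux : u = x
      · exact ⟨v, Or.inr rfl, hux ▸ huv.ne'⟩
      · exact ⟨u, Or.inl rfl, hux⟩
    have hmaps : Set.MapsTo (Sum.elim id fun _ => y) ({Sum.inl x}ᶜ : Set (V ⊕ Unit)) {x}ᶜ := by
      rintro (a | a) ha
      · simpa using ha
      · exact hyx
    refine (hconn (Sum.inl x)).of_surjective_of_adj_imp_eq_or_adj (f := hmaps.restrict) ?_ ?_
    · rintro ⟨a, ha⟩
      exact ⟨⟨Sum.inl a, by simpa using ha⟩, rfl⟩
    · have hend : ∀ a, (a = u ∨ a = v) → a = y ∨ G.Adj a y := by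
        rintro a (rfl | rfl) <;> rcases hy with rfl | rfl <;> simp [huv, huv.symm]
      rintro ⟨a | a, ha⟩ ⟨b | b, hb⟩ hab
      all_goals simp only [comap_adj, Function.Embedding.subtype_apply, subdivideEdge_adj_inl_inl,
        subdivideEdge_adj_inl_inr, subdivideEdge_adj_inr_inl, not_subdivideEdge_adj_inr_inr] at hab
      all_goals simp only [Subtype.ext_iff, Set.MapsTo.val_restrict_apply, Sum.elim_inl,
        Sum.elim_inr, id, comap_adj, Function.Embedding.subtype_apply]
      · exact Or.inr hab.1
      · exact hend a hab
      · exact (hend b hab).imp Eq.symm G.adj_symm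

end SubdivideEdge

lemma IsSubdivisionOf.twoConnected {W U : Type} {H : SimpleGraph W} {G : SimpleGraph U}
    (hs : IsSubdivisionOf H G) (h : TwoConnected G) : TwoConnected H := by
  induction hs with
  | refl G e => exact h.of_iso e.symm
  | step G u v huv _ _ G' e ih => exact ih ((h.of_iso e.symm).of_subdivideEdge huv)

lemma IsSubdivisionOf.unichordFree {W U : Type} {H : SimpleGraph W} {G : SimpleGraph U}
    (hs : IsSubdivisionOf H G) (h : UnichordFree G) : UnichordFree H := by
  induction hs with
  | refl G e => exact h.of_embedding e.symm.toEmbedding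
  | step G u v huv hdeg _ G' e ih =>
    exact ih ((h.of_embedding e.symm.toEmbedding).of_subdivideEdge huv hdeg)

theorem stmt8_general {U W : Type} (G : SimpleGraph U) (G' : SimpleGraph W)
    (h2c : TwoConnected G) (huf : UnichordFree G)
    (hred : IsReducedGraphOf G' G) :
    TwoConnected G' ∧ UnichordFree G' :=
  ⟨hred.2.twoConnected h2c, hred.2.unichordFree huf⟩

/-- If `G` is 2-connected, not a cycle and unichord-free, then its reduced graph
is 2-connected and unichord-free. -/
theorem stmt8 {U W : Type} [Fintype U] [Fintype W] (G : SimpleGraph U) (G' : SimpleGraph W)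
    (h2c : TwoConnected G) (hnc : ¬ IsCycleGraph G) (huf : UnichordFree G)
    (hred : IsReducedGraphOf G' G) :
    TwoConnected G' ∧ UnichordFree G' :=
  stmt8_general G G' h2c huf hred
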